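/- Subterm invariant for the MAM: in any MAM execution starting from the compilation of t_0, the current code and every code occurring in the stack and in the environment is a subterm (up to variable renaming) of t_0. -/

import Mathlib

/-- Lambda terms with named variables. -/
inductive Term : Type
  | var : ℕ → Term
  | lam : ℕ → Term → Term
  | app : Term → Term → Term
deriving DecidableEq

namespace Term

/-- Size: the number of constructors. -/
def size : Term → ℕ
  | var _ => 1
  | lam _ t => t.size + 1
  | app t s => t.size + s.size + 1

/-- Substitution (stopping at matching binders). -/
def subst (x : ℕ) (u : Term) : Term → Term
  | var y => if y = x then u else var y
  | lam y t => if y = x then lam y t else lam y (subst x u t)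
  | app t s => app (subst x u t) (subst x u s)

end Term

/-- Beta reduction: compatible closure of the root beta rule. -/
inductive Beta : Term → Term → Prop
  | beta (x : ℕ) (t u : Term) : Beta (.app (.lam x t) u) (Term.subst x u t)
  | appL {t t' : Term} (u : Term) : Beta t t' → Beta (.app t u) (.app t' u)
  | appR {u u' : Term} (t : Term) : Beta u u' → Beta (.app t u) (.app t u')
  | lam {t t' : Term} (x : ℕ) : Beta t t' → Beta (.lam x t) (.lam x t')

/-- Weak head reduction. -/
inductive Wh : Term → Term → Prop
  | beta (x : ℕ) (t u : Term) : Wh (.app (.lam x t) u) (Term.subst x u t)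
  | appL {t t' : Term} (u : Term) : Wh t t' → Wh (.app t u) (.app t' u)

/-- `StepN R n a b`: `a` reduces to `b` in exactly `n` `R`-steps. -/
inductive StepN {α : Type} (R : α → α → Prop) : ℕ → α → α → Prop
  | refl (a : α) : StepN R 0 a a
  | step {a b c : α} {n : ℕ} : R a b → StepN R n b c → StepN R (n + 1) a c

/-- De Bruijn terms (used to define alpha-equivalence). -/
inductive DB : Type
  | bvar : ℕ → DB
  | fvar : ℕ → DB
  | lam : DB → DB
  | app : DB → DB → DB
deriving DecidableEq

/-- Conversion of a named term to a de Bruijn term, relative to a context of binders. -/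
def toDB (ctx : List ℕ) : Term → DB
  | .var x => if x ∈ ctx then DB.bvar (ctx.idxOf x) else DB.fvar x
  | .lam x t => DB.lam (toDB (x :: ctx) t)
  | .app t s => DB.app (toDB ctx t) (toDB ctx s)

/-- Alpha-equivalence: equality of de Bruijn representations. -/
def AlphaEq (t s : Term) : Prop := toDB [] t = toDB [] s

/-- All variable names occurring in a term (free, bound, and binders). -/
def varsT : Term → Finset ℕ
  | .var x => {x}
  | .lam x t => insert x (varsT t)
  | .app t s => varsT t ∪ varsT s

/-- Bound (binder) names of a term. -/
def bv : Term → Finset ℕ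
  | .var _ => ∅
  | .lam x t => insert x (bv t)
  | .app t s => bv t ∪ bv s

/-- MAM states: a code, an argument stack, and a global environment. -/
abbrev MState : Type := Term × List Term × List (ℕ × Term)

/-- All variable names occurring in a MAM state. -/
def mamVars (s : MState) : Finset ℕ :=
  varsT s.1 ∪ s.2.1.foldr (fun u A => varsT u ∪ A) ∅ ∪
    s.2.2.foldr (fun p A => insert p.1 (varsT p.2) ∪ A) ∅

/-- The searching transition `→@l` of the MAM. -/
inductive MApp : MState → MState → Prop
  | mk (t u : Term) (π : List Term) (E : List (ℕ × Term)) :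
      MApp (.app t u, π, E) (t, u :: π, E)

/-- The beta transition `→rβ` of the MAM. -/
inductive MBeta : MState → MState → Prop
  | mk (x : ℕ) (t u : Term) (π : List Term) (E : List (ℕ × Term)) :
      MBeta (.lam x t, u :: π, E) (t, π, (x, u) :: E)

/-- The micro-substitution transition `→var` of the MAM: the copied code is a
    renaming of the environment entry with fresh bound names. -/
inductive MVar : MState → MState → Prop
  | mk (x : ℕ) (π : List Term) (E1 E2 : List (ℕ × Term)) (t t' : Term)
      (halpha : AlphaEq t t')
      (hfresh : Disjoint (bv t') (mamVars (.var x, π, E1 ++ (x, t) :: E2))) :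
      MVar (.var x, π, E1 ++ (x, t) :: E2) (t', π, E1 ++ (x, t) :: E2)

/-- The transition relation of the MAM. -/
inductive MStep : MState → MState → Prop
  | appl {s s' : MState} : MApp s s' → MStep s s'
  | beta {s s' : MState} : MBeta s s' → MStep s s'
  | var {s s' : MState} : MVar s s' → MStep s s'

/-- MAM executions counting the numbers of `→@l`, `→rβ` and `→var` transitions. -/
inductive MExec : MState → MState → ℕ → ℕ → ℕ → Prop
  | refl (s : MState) : MExec s s 0 0 0
  | appl {s s' s'' : MState} {a b c : ℕ} :
      MApp s s' → MExec s' s'' a b c → MExec s s'' (a + 1) b c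
  | beta {s s' s'' : MState} {a b c : ℕ} :
      MBeta s s' → MExec s' s'' a b c → MExec s s'' a (b + 1) c
  | var {s s' s'' : MState} {a b c : ℕ} :
      MVar s s' → MExec s' s'' a b c → MExec s s'' a b (c + 1)

/-- Term skeletons: terms with all variable names erased. -/
inductive Sk : Type
  | star : Sk
  | lam : Sk → Sk
  | app : Sk → Sk → Sk
deriving DecidableEq

/-- Erasure of all variable names. -/
def erase : Term → Sk
  | .var _ => .star
  | .lam _ t => .lam (erase t)
  | .app t s => .app (erase t) (erase s)

/-- The subterm relation on skeletons. -/
inductive SkSub : Sk → Sk → Prop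
  | refl (t : Sk) : SkSub t t
  | lam {s t : Sk} : SkSub s t → SkSub s (.lam t)
  | appL {s t u : Sk} : SkSub s t → SkSub s (.app t u)
  | appR {s t u : Sk} : SkSub s u → SkSub s (.app t u)

/-- `s` is a subterm of `t` up to variable names. -/
def SubtermUpTo (s t : Term) : Prop := SkSub (erase s) (erase t)

/-! The invariant is inductive: `→@l` and `→rβ` only move immediate subterms of the code into the
stack or environment (or from the stack into the environment), and `→var` replaces the code by an
alpha-renaming of an environment entry, which has the same skeleton. -/

theorem SkSub.trans {a b c : Sk} (hab : SkSub a b) (hbc : SkSub b c) : SkSub a c := by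
  induction hbc with
  | refl => exact hab
  | lam _ ih => exact .lam ih
  | appL _ ih => exact .appL ih
  | appR _ ih => exact .appR ih

def DB.erase : DB → Sk
  | .bvar _ => .star
  | .fvar _ => .star
  | .lam t => .lam t.erase
  | .app t s => .app t.erase s.erase

theorem DB.erase_toDB (ctx : List ℕ) (t : Term) : (toDB ctx t).erase = _root_.erase t := by
  induction t generalizing ctx with
  | var x => unfold toDB; split <;> rfl
  | lam x t ih => simp only [toDB, DB.erase, _root_.erase, ih]
  | app t s iht ihs => simp only [toDB, DB.erase, _root_.erase, iht, ihs]

theorem AlphaEq.erase_eq {t t' : Term} (h : AlphaEq t t') : erase t = erase t' := by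
  rw [← DB.erase_toDB [] t, ← DB.erase_toDB [] t', show toDB [] t = toDB [] t' from h]

def SubtermInvariant (t0 : Term) (s : MState) : Prop :=
  SubtermUpTo s.1 t0 ∧ (∀ u ∈ s.2.1, SubtermUpTo u t0) ∧ (∀ p ∈ s.2.2, SubtermUpTo p.2 t0)

theorem subtermInvariant_init (t0 : Term) : SubtermInvariant t0 (t0, [], []) :=
  ⟨.refl _, by simp, by simp⟩

section Preservation

variable {t0 : Term} {s s' : MState}

theorem MApp.subtermInvariant (hs : MApp s s') (h : SubtermInvariant t0 s) :
    SubtermInvariant t0 s' := by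
  obtain ⟨t, u, π, E⟩ := hs
  obtain ⟨hcode, hstack, henv⟩ := h
  refine ⟨(SkSub.appL (.refl _)).trans hcode, ?_, henv⟩
  rintro v (_ | ⟨_, hv⟩)
  · exact (SkSub.appR (.refl _)).trans hcode
  · exact hstack v hv

theorem MBeta.subtermInvariant (hs : MBeta s s') (h : SubtermInvariant t0 s) :
    SubtermInvariant t0 s' := by
  obtain ⟨x, t, u, π, E⟩ := hs
  obtain ⟨hcode, hstack, henv⟩ := h
  refine ⟨(SkSub.lam (.refl _)).trans hcode, fun v hv ↦ hstack v (.tail _ hv), ?_⟩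
  rintro p (_ | ⟨_, hp⟩)
  · exact hstack u List.mem_cons_self
  · exact henv p hp

theorem MVar.subtermInvariant (hs : MVar s s') (h : SubtermInvariant t0 s) :
    SubtermInvariant t0 s' := by
  obtain ⟨x, π, E1, E2, t, t', halpha, -⟩ := hs
  obtain ⟨-, hstack, henv⟩ := h
  have hentry : SubtermUpTo t t0 := henv (x, t) (by simp)
  exact ⟨by rwa [SubtermUpTo, ← halpha.erase_eq], hstack, henv⟩

theorem MStep.subtermInvariant (hs : MStep s s') (h : SubtermInvariant t0 s) :
    SubtermInvariant t0 s' := by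
  cases hs with
  | appl hs => exact hs.subtermInvariant h
  | beta hs => exact hs.subtermInvariant h
  | var hs => exact hs.subtermInvariant h

end Preservation

/-- Subterm invariant for the MAM: along any execution from the
    compilation `(t₀, ε, ε)`, the code and all codes in the stack and environment
    are subterms of `t₀` up to variable names. -/
theorem mam_subterm_invariant (t0 : Term) (s : MState)
    (h : Relation.ReflTransGen MStep (t0, [], []) s) :
    SubtermUpTo s.1 t0 ∧ (∀ u ∈ s.2.1, SubtermUpTo u t0) ∧
      (∀ p ∈ s.2.2, SubtermUpTo p.2 t0) := by
  induction h with
  | refl => exact subtermInvariant_init t0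
  | tail _ hstep ih => exact hstep.subtermInvariant ih
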